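/- arXiv:2502.16354 — 3 statements merged into one kernel-verified Lean document; each statement's English description precedes it below -/
import Mathlib

section
/- Let X be a hereditarily normal T1 space and let M ⊆ X be a subspace with ind M ≤ 0, i.e., every point of M has a neighborhood basis in the subspace M consisting of relatively clopen subsets of M. Then for every point x ∈ M and every closed subset A of X with x ∉ A, there exists a partition L between {x} and A in X such that L ∩ M = ∅. -/
/-- The Bing–Hanner extension `τ(M)` of a topology `τ` on `X` determined by a subset `M ⊆ X`:
its open sets are exactly the sets of the form `U ∪ K` with `U` a `τ`-open set and
`K ⊆ X \ M`. -/
def bingHanner {X : Type*} (τ : TopologicalSpace X) (M : Set X) : TopologicalSpace X where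
  IsOpen O := ∃ U K : Set X, τ.IsOpen U ∧ K ⊆ Mᶜ ∧ O = U ∪ K
  isOpen_univ := ⟨Set.univ, ∅, τ.isOpen_univ, by simp, by simp⟩
  isOpen_inter := by
    rintro s t ⟨U₁, K₁, hU₁, hK₁, rfl⟩ ⟨U₂, K₂, hU₂, hK₂, rfl⟩
    refine ⟨U₁ ∩ U₂, ((U₁ ∪ K₁) ∩ (U₂ ∪ K₂)) \ (U₁ ∩ U₂),
      τ.isOpen_inter _ _ hU₁ hU₂, ?_, ?_⟩
    · rintro x ⟨⟨h1, h2⟩, hn⟩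
      rcases h1 with h1 | h1
      · rcases h2 with h2 | h2
        · exact absurd ⟨h1, h2⟩ hn
        · exact hK₂ h2
      · exact hK₁ h1
    · have hsub : U₁ ∩ U₂ ⊆ (U₁ ∪ K₁) ∩ (U₂ ∪ K₂) :=
        fun x hx => ⟨Or.inl hx.1, Or.inl hx.2⟩
      exact (Set.union_diff_cancel hsub).symm
  isOpen_sUnion := by
    intro S hS
    choose U K hU hK hEq using hS
    refine ⟨⋃ s, ⋃ h : s ∈ S, U s h, ⋃ s, ⋃ h : s ∈ S, K s h, ?_, ?_, ?_⟩
    · letI := τ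
      exact isOpen_iUnion fun s => isOpen_iUnion fun h => hU s h
    · exact Set.iUnion_subset fun s => Set.iUnion_subset fun h => hK s h
    · ext x
      simp only [Set.mem_sUnion, Set.mem_union, Set.mem_iUnion]
      constructor
      · rintro ⟨s, hs, hx⟩
        rw [hEq s hs] at hx
        rcases hx with hx | hx
        · exact Or.inl ⟨s, hs, hx⟩
        · exact Or.inr ⟨s, hs, hx⟩
      · rintro (⟨s, hs, hx⟩ | ⟨s, hs, hx⟩)
        · exact ⟨s, hs, by rw [hEq s hs]; exact Or.inl hx⟩
        · exact ⟨s, hs, by rw [hEq s hs]; exact Or.inr hx⟩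

/-- `covDimLE t n` : the covering dimension of `(X, t)` is at most `n`, i.e. every finite
open cover admits a finite open refinement covering `X` in which any `n + 2` pairwise
distinct members have empty intersection. -/
def covDimLE {X : Type*} (t : TopologicalSpace X) (n : ℕ) : Prop :=
  ∀ C : Set (Set X), C.Finite → (∀ U ∈ C, t.IsOpen U) → ⋃₀ C = Set.univ →
    ∃ V : Set (Set X), V.Finite ∧ (∀ U ∈ V, t.IsOpen U) ∧ ⋃₀ V = Set.univ ∧
      (∀ U ∈ V, ∃ W ∈ C, U ⊆ W) ∧
      ∀ F : Finset (Set X), ↑F ⊆ V → F.card = n + 2 → ⋂₀ (F : Set (Set X)) = ∅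

/-- `IndLE0 t` : the large inductive dimension of `(Z, t)` is at most `0`, i.e. any two
disjoint closed sets are separated by a clopen set. -/
def IndLE0 {Z : Type*} (t : TopologicalSpace Z) : Prop :=
  ∀ A B : Set Z, @IsClosed Z t A → @IsClosed Z t B → Disjoint A B →
    ∃ U : Set Z, t.IsOpen U ∧ @IsClosed Z t U ∧ A ⊆ U ∧ U ∩ B = ∅

/-- `indLE0 t` : the small inductive dimension of `(Z, t)` is at most `0`, i.e. every point
has a neighborhood basis of clopen sets. -/
def indLE0 {Z : Type*} (t : TopologicalSpace Z) : Prop :=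
  ∀ (x : Z) (O : Set Z), t.IsOpen O → x ∈ O →
    ∃ U : Set Z, t.IsOpen U ∧ @IsClosed Z t U ∧ x ∈ U ∧ U ⊆ O

/-- `L` is a partition between `A` and `B` in `(X, t)`. -/
def isPartitionBetween {X : Type*} (t : TopologicalSpace X) (A B L : Set X) : Prop :=
  ∃ U V : Set X, t.IsOpen U ∧ t.IsOpen V ∧ Disjoint U V ∧ A ⊆ U ∧ B ⊆ V ∧ L = (U ∪ V)ᶜ

/-! Choose a neighbourhood `C` of `x` that is clopen in `M` and whose closure misses `A`. The sets
`C` and `(M \ C) ∪ A` are separated, so hereditary normality gives disjoint open `U ⊇ C` and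
`V ⊇ (M \ C) ∪ A`; the partition `X \ (U ∪ V)` misses `M ⊆ C ∪ (M \ C)`. -/

open Set Topology

section

variable {X : Type*} [TopologicalSpace X]

theorem isPartitionBetween.mono_left {A A' B L : Set X}
    (hL : isPartitionBetween ‹_› A B L) (hA' : A' ⊆ A) : isPartitionBetween ‹_› A' B L :=
  let ⟨U, V, hU, hV, hUV, hAU, hBV, hL⟩ := hL
  ⟨U, V, hU, hV, hUV, hA'.trans hAU, hBV, hL⟩

theorem disjoint_closure_image_val_image_val_compl {M : Set X} {s : Set M} (hs : IsClosed s) :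
    Disjoint (closure (((↑) : M → X) '' s)) ((↑) '' sᶜ) := by
  refine disjoint_right.mpr ?_
  rintro _ ⟨m, hm, rfl⟩
  rw [← mem_preimage, ← IsInducing.subtypeVal.closure_eq_preimage_closure_image, hs.closure_eq]
  exact hm

theorem exists_partition_disjoint_of_isClopen [CompletelyNormalSpace X] {M A : Set X}
    (hA : IsClosed A) {s : Set M} (hs : IsClopen s)
    (hsA : Disjoint (closure (((↑) : M → X) '' s)) A) :
    ∃ L, isPartitionBetween ‹_› ((↑) '' s) A L ∧ L ∩ M = ∅ := by
  have h_closure_left : Disjoint (closure (((↑) : M → X) '' s)) ((↑) '' sᶜ ∪ A) :=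
    disjoint_union_right.mpr ⟨disjoint_closure_image_val_image_val_compl hs.isClosed, hsA⟩
  have h_closure_right : Disjoint ((↑) '' s) (closure (((↑) : M → X) '' sᶜ ∪ A)) := by
    rw [closure_union, hA.closure_eq]
    refine disjoint_union_right.mpr ⟨?_, hsA.mono_left subset_closure⟩
    simpa using (disjoint_closure_image_val_image_val_compl hs.isOpen.isClosed_compl).symm
  obtain ⟨U, V, hU, hV, hU_sup, hV_sup, hUV⟩ := separatedNhds_iff_disjoint.mpr
    (CompletelyNormalSpace.completely_normal h_closure_left h_closure_right)
  refine ⟨(U ∪ V)ᶜ, ⟨U, V, hU, hV, hUV, hU_sup, subset_union_right.trans hV_sup, rfl⟩, ?_⟩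
  refine eq_empty_of_forall_notMem fun z ⟨hzL, hzM⟩ => hzL ?_
  by_cases hzs : (⟨z, hzM⟩ : M) ∈ s
  · exact Or.inl (hU_sup ⟨_, hzs, rfl⟩)
  · exact Or.inr (hV_sup (Or.inl ⟨_, hzs, rfl⟩))

end

/-- If `X` is hereditarily normal `T₁` and `M ⊆ X` satisfies `ind M ≤ 0`,
then for every `x ∈ M` and closed `A ⊆ X` with `x ∉ A` there is a partition `L` between
`{x}` and `A` with `L ∩ M = ∅`. -/
theorem partition_avoiding_indZero_subspace {X : Type*} (τ : TopologicalSpace X)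
    (hT5 : @T5Space X τ) (M : Set X)
    (hM : indLE0 (TopologicalSpace.induced (Subtype.val : M → X) τ))
    (x : X) (hx : x ∈ M) (A : Set X) (hA : @IsClosed X τ A) (hxA : x ∉ A) :
    ∃ L : Set X, isPartitionBetween τ {x} A L ∧ L ∩ M = ∅ := by
  let _ := τ
  have := hT5
  obtain ⟨K, hKx, hK, hKA⟩ :=
    exists_mem_nhds_isClosed_subset (hA.isOpen_compl.mem_nhds hxA)
  obtain ⟨s, hs_open, hs_closed, hxs, hsK⟩ := hM ⟨x, hx⟩ (Subtype.val ⁻¹' interior K)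
    (isOpen_interior.preimage continuous_subtype_val) (mem_interior_iff_mem_nhds.mpr hKx)
  have hsA : Disjoint (closure (((↑) : M → X) '' s)) A := by
    refine disjoint_compl_left.mono_left (subset_trans ?_ hKA)
    exact closure_minimal (image_subset_iff.mpr (hsK.trans (preimage_mono interior_subset))) hK
  obtain ⟨L, hL, hLM⟩ := exists_partition_disjoint_of_isClopen hA ⟨hs_closed, hs_open⟩ hsA
  exact ⟨L, hL.mono_left (singleton_subset_iff.mpr ⟨_, hxs, rfl⟩), hLM⟩
end

section
/- Let τ_E denote the Euclidean topology on the real line ℝ. There exist subsets M_1, M_2 ⊆ ℝ (for example, the complements of two disjoint countable dense subsets of ℝ) such that τ_E = τ_E(M_1) ∩ τ_E(M_2) and, for i = 1, 2, the space (ℝ, τ_E(M_i)) is separable, metrizable, and satisfies dim (ℝ, τ_E(M_i)) ≤ 0. -/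
open Set TopologicalSpace Topology

section BingHanner

variable {X : Type*} [τ : TopologicalSpace X] (M : Set X)

theorem isOpen_bingHanner_of_isOpen {U : Set X} (hU : IsOpen U) : IsOpen[bingHanner τ M] U :=
  ⟨U, ∅, hU, empty_subset _, (union_empty U).symm⟩

theorem isOpen_bingHanner_of_subset_compl {K : Set X} (hK : K ⊆ Mᶜ) :
    IsOpen[bingHanner τ M] K :=
  ⟨∅, K, isOpen_empty, hK, (empty_union K).symm⟩

theorem bingHanner_le : bingHanner τ M ≤ τ :=
  TopologicalSpace.le_def.2 fun _ => isOpen_bingHanner_of_isOpen M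

theorem isOpen_iff_isOpen_bingHanner_and_isOpen_bingHanner {M₁ M₂ : Set X}
    (hM : M₁ ∪ M₂ = univ) (O : Set X) :
    IsOpen O ↔ IsOpen[bingHanner τ M₁] O ∧ IsOpen[bingHanner τ M₂] O := by
  refine ⟨fun hO => ⟨isOpen_bingHanner_of_isOpen M₁ hO, isOpen_bingHanner_of_isOpen M₂ hO⟩, ?_⟩
  rintro ⟨⟨U₁, K₁, hU₁, hK₁, rfl⟩, ⟨U₂, K₂, hU₂, hK₂, hO⟩⟩
  -- A point of `K₁ ∩ K₂` would lie outside `M₁ ∪ M₂ = univ`.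
  suffices U₁ ∪ K₁ = U₁ ∪ U₂ from this ▸ IsOpen.union hU₁ hU₂
  refine Subset.antisymm (fun x hx => ?_) (union_subset subset_union_left fun x hx => ?_)
  · rcases hx with hx₁ | hx₁
    · exact Or.inl hx₁
    have hx₂ : x ∈ U₂ ∪ K₂ := hO ▸ Or.inr hx₁
    rcases hx₂ with hx₂ | hx₂
    · exact Or.inr hx₂
    · have : x ∈ M₁ ∪ M₂ := hM ▸ mem_univ x
      exact (this.elim (hK₁ hx₁) (hK₂ hx₂)).elim
  · exact hO ▸ Or.inl hx

theorem isTopologicalBasis_bingHanner {B : Set (Set X)} (hB : IsTopologicalBasis B) :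
    @IsTopologicalBasis X (bingHanner τ M) (B ∪ (fun x => {x}) '' Mᶜ) := by
  refine @isTopologicalBasis_of_isOpen_of_nhds X (bingHanner τ M) _ ?_ ?_
  · rintro s (hs | ⟨x, hx, rfl⟩)
    · exact isOpen_bingHanner_of_isOpen M (hB.isOpen hs)
    · exact isOpen_bingHanner_of_subset_compl M (singleton_subset_iff.2 hx)
  · rintro x _ hx ⟨U, K, hU, hK, rfl⟩
    rcases hx with hxU | hxK
    · obtain ⟨s, hsB, hxs, hsU⟩ := hB.exists_subset_of_mem_open hxU hU
      exact ⟨s, Or.inl hsB, hxs, hsU.trans subset_union_left⟩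
    · exact ⟨{x}, Or.inr ⟨x, hK hxK, rfl⟩, rfl, singleton_subset_iff.2 (Or.inr hxK)⟩

theorem isClopen_bingHanner_singleton [T1Space X] {x : X} (hx : x ∉ M) :
    @IsClopen X (bingHanner τ M) {x} :=
  ⟨@IsClosed.mk X (bingHanner τ M) _ (isOpen_bingHanner_of_isOpen M isOpen_compl_singleton),
    isOpen_bingHanner_of_subset_compl M (singleton_subset_iff.2 hx)⟩

theorem isClopen_bingHanner_Ioo [LinearOrder X] [OrderTopology X] {a b : X} (ha : a ∉ M)
    (hb : b ∉ M) : @IsClopen X (bingHanner τ M) (Ioo a b) := by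
  refine ⟨@IsClosed.mk X (bingHanner τ M) _
    ⟨Iio a ∪ Ioi b, {a, b}, isOpen_Iio.union isOpen_Ioi, ?_, ?_⟩,
    isOpen_bingHanner_of_isOpen M isOpen_Ioo⟩
  · exact insert_subset ha (singleton_subset_iff.2 hb)
  · ext x
    simp only [mem_compl_iff, mem_Ioo, mem_union, mem_Iio, mem_Ioi, mem_insert_iff,
      mem_singleton_iff, not_and_or, not_lt, le_iff_lt_or_eq]
    tauto

end BingHanner

theorem Dense.isTopologicalBasis_image2_Ioo {X : Type*} [LinearOrder X] [TopologicalSpace X]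
    [OrderTopology X] [DenselyOrdered X] [NoMinOrder X] [NoMaxOrder X] {D : Set X}
    (hD : Dense D) : IsTopologicalBasis (image2 Ioo D D) := by
  refine isTopologicalBasis_of_isOpen_of_nhds ?_ fun x U hxU hU => ?_
  · rintro _ ⟨a, -, b, -, rfl⟩
    exact isOpen_Ioo
  obtain ⟨l, u, ⟨hlx, hxu⟩, hluU⟩ := mem_nhds_iff_exists_Ioo_subset.1 (hU.mem_nhds hxU)
  obtain ⟨a, ha, hla, hax⟩ := hD.exists_between hlx
  obtain ⟨b, hb, hxb, hbu⟩ := hD.exists_between hxu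
  exact ⟨Ioo a b, mem_image2_of_mem ha hb, ⟨hax, hxb⟩,
    (Ioo_subset_Ioo hla.le hbu.le).trans hluU⟩

section DisjointRefinement

variable {X : Type*} [TopologicalSpace X]

structure IsDisjointOpenRefinement (C V : Set (Set X)) : Prop where
  isOpen : ∀ U ∈ V, IsOpen U
  sUnion_eq : ⋃₀ V = univ
  refines : ∀ U ∈ V, ∃ W ∈ C, U ⊆ W
  pairwiseDisjoint : V.PairwiseDisjoint id

theorem IsDisjointOpenRefinement.exists_finite {C V : Set (Set X)} (hC : C.Finite)
    (hV : IsDisjointOpenRefinement C V) :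
    ∃ V' : Set (Set X), V'.Finite ∧ IsDisjointOpenRefinement C V' := by
  obtain ⟨hVopen, hVcov, hVC, hV⟩ := hV
  choose! w hwC hUw using hVC
  set piece : Set X → Set X := fun W => ⋃₀ {U ∈ V | w U = W}
  refine ⟨piece '' C, hC.image piece, ⟨?_, ?_, ?_, ?_⟩⟩
  · rintro _ ⟨W, -, rfl⟩
    exact isOpen_sUnion fun U hU => hVopen U hU.1
  · refine eq_univ_of_forall fun x => ?_
    obtain ⟨U, hUV, hxU⟩ := mem_sUnion.1 (hVcov ▸ mem_univ x)
    exact ⟨piece (w U), mem_image_of_mem piece (hwC U hUV), U, ⟨hUV, rfl⟩, hxU⟩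
  · rintro _ ⟨W, hWC, rfl⟩
    exact ⟨W, hWC, sUnion_subset fun U hU => hU.2 ▸ hUw U hU.1⟩
  · rintro _ ⟨W₁, -, rfl⟩ _ ⟨W₂, -, rfl⟩ hne
    refine disjoint_sUnion_left.2 fun U₁ hU₁ => disjoint_sUnion_right.2 fun U₂ hU₂ => ?_
    obtain rfl | hU := eq_or_ne U₁ U₂
    · exact absurd (hU₁.2 ▸ hU₂.2 ▸ rfl) hne
    · exact hV hU₁.1 hU₂.1 hU

theorem covDimLE_zero_of_forall_exists_disjointOpenRefinement
    (h : ∀ C : Set (Set X), C.Finite → (∀ U ∈ C, IsOpen U) → ⋃₀ C = univ →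
      ∃ V, V.Finite ∧ IsDisjointOpenRefinement C V) :
    covDimLE ‹TopologicalSpace X› 0 := by
  intro C hC hCopen hCcov
  obtain ⟨V, hVfin, hVopen, hVcov, hVC, hV⟩ := h C hC hCopen hCcov
  refine ⟨V, hVfin, hVopen, hVcov, hVC, fun F hFV hF => ?_⟩
  obtain ⟨U₁, U₂, hne, rfl⟩ := Finset.card_eq_two.1 hF
  have hU₁ : U₁ ∈ V := hFV (by simp)
  have hU₂ : U₂ ∈ V := hFV (by simp)
  have : Disjoint U₁ U₂ := hV hU₁ hU₂ hne
  simpa [← disjoint_iff_inter_eq_empty]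

end DisjointRefinement

namespace TopologicalSpace.IsTopologicalBasis

variable {X : Type*} [TopologicalSpace X] {B : Set (Set X)}

theorem metrizableSpace_of_isClopen [T0Space X] (hB : IsTopologicalBasis B)
    (hBc : B.Countable) (hBclopen : ∀ s ∈ B, IsClopen s) : MetrizableSpace X := by
  have := hB.secondCountableTopology hBc
  have := CompletelyRegularSpace.of_isTopologicalBasis_clopens
    (hB.of_isOpen_of_subset (fun _ hs => IsClopen.isOpen hs) hBclopen)
  infer_instance

theorem exists_isDisjointOpenRefinement_of_isClopen (hB : IsTopologicalBasis B)
    (hBc : B.Countable) (hBclopen : ∀ s ∈ B, IsClopen s) {C : Set (Set X)}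
    (hCopen : ∀ U ∈ C, IsOpen U) (hCcov : ⋃₀ C = univ) :
    ∃ V, IsDisjointOpenRefinement C V := by
  set G := {s ∈ B | ∃ W ∈ C, s ⊆ W}
  have hGcov : ⋃₀ G = univ := by
    refine eq_univ_of_forall fun x => ?_
    obtain ⟨W, hWC, hxW⟩ := mem_sUnion.1 (hCcov ▸ mem_univ x)
    obtain ⟨s, hsB, hxs, hsW⟩ := hB.exists_subset_of_mem_open hxW (hCopen W hWC)
    exact ⟨s, ⟨hsB, W, hWC, hsW⟩, hxs⟩
  rcases G.eq_empty_or_nonempty with hG | hG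
  · exact ⟨∅, ⟨by simp, by simpa [hG] using hGcov, by simp, pairwiseDisjoint_empty⟩⟩
  obtain ⟨f, hf⟩ := (hBc.mono fun _ hs => hs.1).exists_eq_range hG
  have hfG : ∀ n, f n ∈ G := fun n => hf ▸ mem_range_self n
  refine ⟨range (disjointed f), ?_, ?_, ?_, ?_⟩
  · rintro _ ⟨n, rfl⟩
    rw [disjointed_eq_inter_compl]
    exact (hBclopen _ (hfG n).1).isOpen.inter <|
      (finite_Iio n).isOpen_biInter fun m _ => (hBclopen _ (hfG m).1).compl.isOpen
  · rwa [sUnion_range, iUnion_disjointed, ← sUnion_range, ← hf]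
  · rintro _ ⟨n, rfl⟩
    obtain ⟨W, hWC, hfW⟩ := (hfG n).2
    exact ⟨W, hWC, (disjointed_subset f n).trans hfW⟩
  · exact pairwiseDisjoint_range_iff.2 fun m n hmn => disjoint_disjointed f (ne_of_apply_ne _ hmn)

theorem covDimLE_zero_of_isClopen (hB : IsTopologicalBasis B) (hBc : B.Countable)
    (hBclopen : ∀ s ∈ B, IsClopen s) : covDimLE ‹TopologicalSpace X› 0 :=
  covDimLE_zero_of_forall_exists_disjointOpenRefinement fun _ hC hCopen hCcov =>
    (hB.exists_isDisjointOpenRefinement_of_isClopen hBc hBclopen hCopen hCcov).elim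
      fun _ hV => hV.exists_finite hC

end TopologicalSpace.IsTopologicalBasis

theorem bingHanner_separableSpace_metrizableSpace_covDimLE_zero {X : Type*} [LinearOrder X]
    [τ : TopologicalSpace X] [OrderTopology X] [DenselyOrdered X] [NoMinOrder X] [NoMaxOrder X]
    {M : Set X} (hc : Mᶜ.Countable) (hd : Dense Mᶜ) :
    @SeparableSpace X (bingHanner τ M) ∧ @MetrizableSpace X (bingHanner τ M) ∧
      covDimLE (bingHanner τ M) 0 := by
  set B := image2 Ioo Mᶜ Mᶜ ∪ (fun x => {x}) '' Mᶜ
  have hB : @IsTopologicalBasis X (bingHanner τ M) B :=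
    isTopologicalBasis_bingHanner M hd.isTopologicalBasis_image2_Ioo
  have hBc : B.Countable := (hc.image2 hc _).union (hc.image _)
  have hBclopen : ∀ s ∈ B, @IsClopen X (bingHanner τ M) s := by
    rintro _ (⟨a, ha, b, hb, rfl⟩ | ⟨x, hx, rfl⟩)
    exacts [isClopen_bingHanner_Ioo M ha hb, isClopen_bingHanner_singleton M hx]
  have : @T2Space X (bingHanner τ M) := t2Space_antitone (bingHanner_le M) inferInstance
  let := bingHanner τ M
  have := hB.secondCountableTopology hBc
  exact ⟨inferInstance, hB.metrizableSpace_of_isClopen hBc hBclopen,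
    hB.covDimLE_zero_of_isClopen hBc hBclopen⟩

/-- There exist `M₁, M₂ ⊆ ℝ` such that the Euclidean topology is the
intersection of `τ_E(M₁)` and `τ_E(M₂)`, and both `(ℝ, τ_E(M_i))` are separable,
metrizable, of covering dimension at most `0`. -/
theorem real_line_two_zeroDim_extensions :
    ∃ M₁ M₂ : Set ℝ,
      (∀ O : Set ℝ, IsOpen O ↔
        ((bingHanner (inferInstance : TopologicalSpace ℝ) M₁).IsOpen O ∧
         (bingHanner (inferInstance : TopologicalSpace ℝ) M₂).IsOpen O)) ∧
      (@TopologicalSpace.SeparableSpace ℝ (bingHanner (inferInstance : TopologicalSpace ℝ) M₁) ∧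
        @TopologicalSpace.MetrizableSpace ℝ (bingHanner (inferInstance : TopologicalSpace ℝ) M₁) ∧
        covDimLE (bingHanner (inferInstance : TopologicalSpace ℝ) M₁) 0) ∧
      (@TopologicalSpace.SeparableSpace ℝ (bingHanner (inferInstance : TopologicalSpace ℝ) M₂) ∧
        @TopologicalSpace.MetrizableSpace ℝ (bingHanner (inferInstance : TopologicalSpace ℝ) M₂) ∧
        covDimLE (bingHanner (inferInstance : TopologicalSpace ℝ) M₂) 0) := by
  set D₁ : Set ℝ := range ((↑) : ℚ → ℝ)
  set D₂ : Set ℝ := range fun q : ℚ => (q : ℝ) + √2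
  have hdisj : Disjoint D₁ D₂ := by
    rw [disjoint_left]
    rintro _ ⟨q, rfl⟩ ⟨p, hp⟩
    exact (irrational_sqrt_two.ratCast_add p).ne_rat q hp
  have hD₁ : Dense D₁ := Rat.denseRange_cast
  have hD₂ : Dense D₂ :=
    (Homeomorph.addRight √2).surjective.denseRange.comp Rat.denseRange_cast (by fun_prop)
  refine ⟨D₁ᶜ, D₂ᶜ, isOpen_iff_isOpen_bingHanner_and_isOpen_bingHanner ?_, ?_, ?_⟩
  · rw [← compl_inter, hdisj.inter_eq, compl_empty]
  · exact bingHanner_separableSpace_metrizableSpace_covDimLE_zero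
      (by rw [compl_compl]; exact countable_range _) (by rwa [compl_compl])
  · exact bingHanner_separableSpace_metrizableSpace_covDimLE_zero
      (by rw [compl_compl]; exact countable_range _) (by rwa [compl_compl])
end

section
/- Let (X, τ) be a separable metrizable space for which dim (X, τ) ≤ 1 fails, and let M ⊆ X be a Gδ-subset whose subspace satisfies dim M ≤ 0. Then the metrizable space (X, τ(M)) is not separable. (In particular, the complement X \ M is uncountable.) -/
/-! Points of `X \ M` are isolated in `τ(M)`, so if `τ(M)` is separable then `X \ M` is countable
and hence zero-dimensional. A metric space that is the union of two zero-dimensional subspaces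
has covering dimension at most one (the case `0 + 0 + 1` of the addition theorem). -/

open Set Metric

theorem sInter_eq_empty_of_pairwiseDisjoint {α : Type*} {V F : Set (Set α)}
    (hV : V.PairwiseDisjoint id) {a b : Set α} (ha : a ∈ V) (hb : b ∈ V) (hab : a ≠ b)
    (haF : a ∈ F) (hbF : b ∈ F) : ⋂₀ F = ∅ :=
  subset_empty_iff.1 fun _ hx ↦ (hV ha hb hab).le_bot ⟨hx a haF, hx b hbF⟩

/-- Among three members of `V₁ ∪ V₂` two lie in the same family. -/
theorem sInter_eq_empty_of_card_eq_three {α : Type*} {V₁ V₂ : Set (Set α)}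
    (h₁ : V₁.PairwiseDisjoint id) (h₂ : V₂.PairwiseDisjoint id) {F : Finset (Set α)}
    (hF : ↑F ⊆ V₁ ∪ V₂) (hcard : F.card = 3) : ⋂₀ (F : Set (Set α)) = ∅ := by
  classical
  obtain ⟨a, ha, b, hb, hab, hsame⟩ :=
    Finset.exists_ne_map_eq_of_card_lt_of_maps_to (s := F) (t := Finset.univ)
      (f := fun v ↦ decide (v ∈ V₁)) (by simp [hcard])
      fun _ _ ↦ Finset.mem_coe.2 (Finset.mem_univ _)
  by_cases haV : a ∈ V₁
  · have hbV : b ∈ V₁ := by simpa [haV] using hsame.symm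
    exact sInter_eq_empty_of_pairwiseDisjoint h₁ haV hbV hab ha hb
  · have hbV : b ∉ V₁ := by simpa [haV] using hsame.symm
    exact sInter_eq_empty_of_pairwiseDisjoint h₂ ((hF ha).resolve_left haV)
      ((hF hb).resolve_left hbV) hab ha hb

/-- A continuous `f : Y → [0, 1]` separating `A` from `B` misses some level `r ∈ (0, 1)`,
and `{f < r} = {f ≤ r}` is then clopen. -/
theorem indLE0_of_countable {Y : Type*} [TopologicalSpace Y] [NormalSpace Y] [Countable Y] :
    IndLE0 (inferInstance : TopologicalSpace Y) := by
  intro A B hA hB hAB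
  obtain ⟨f, hfA, hfB, -⟩ := exists_continuous_zero_one_of_isClosed hA hB hAB
  obtain ⟨r, ⟨hr0, hr1⟩, hrf⟩ : (Ioo (0 : ℝ) 1 \ range f).Nonempty := by
    by_contra h
    have : (Ioo (0 : ℝ) 1).Countable :=
      (countable_range f).mono (sdiff_eq_empty.1 (not_nonempty_iff_eq_empty.1 h))
    exact absurd (Cardinal.Real.Ioo_countable_iff.1 this) (by norm_num)
  have hlt_eq_le : f ⁻¹' Iio r = f ⁻¹' Iic r :=
    (preimage_mono Iio_subset_Iic_self).antisymm fun y hy ↦ lt_of_le_of_ne hy fun he ↦ hrf ⟨y, he⟩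
  refine ⟨f ⁻¹' Iio r, isOpen_Iio.preimage f.continuous, ?_, fun a ha ↦ ?_, ?_⟩
  · exact hlt_eq_le ▸ isClosed_Iic.preimage f.continuous
  · simpa [mem_preimage, hfA ha] using hr0
  · refine eq_empty_iff_forall_notMem.2 fun y ⟨hy, hyB⟩ ↦ ?_
    simp only [mem_preimage, hfB hyB, Pi.one_apply, mem_Iio] at hy
    linarith

/-- Clopen separation of `R \ ⋃₀ C` from `Oᶜ` splits off a clopen piece inside the new member
`O`; the rest of `R` is handled by the smaller family `C`. -/
theorem exists_disjoint_open_refinement_of_indLE0 {Y : Type*} [TopologicalSpace Y]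
    (h : IndLE0 (inferInstance : TopologicalSpace Y)) {C : Set (Set Y)} (hCf : C.Finite)
    (hCo : ∀ U ∈ C, IsOpen U) {R : Set Y} (hR : IsClosed R) (hRC : R ⊆ ⋃₀ C) :
    ∃ V : Set (Set Y), V.Finite ∧ (∀ v ∈ V, IsOpen v) ∧ R ⊆ ⋃₀ V ∧
      (∀ v ∈ V, ∃ U ∈ C, v ⊆ U) ∧ V.PairwiseDisjoint id := by
  induction C, hCf using Set.Finite.induction_on generalizing R with
  | empty =>
    exact ⟨∅, finite_empty, by simp, by simpa using hRC, by simp, pairwiseDisjoint_empty⟩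
  | @insert O C _ hCf ih =>
    have hO : IsOpen O := hCo O (mem_insert _ _)
    have hCo' : ∀ U ∈ C, IsOpen U := fun U hU ↦ hCo U (mem_insert_of_mem _ hU)
    obtain ⟨W, hWo, hWc, hRW, hWO⟩ := h (R \ ⋃₀ C) Oᶜ
      (hR.sdiff (isOpen_sUnion hCo')) hO.isClosed_compl
      (disjoint_compl_right_iff_subset.2 fun x ⟨hxR, hxC⟩ ↦ by
        simpa [sUnion_insert, hxC] using hRC hxR)
    have hWO : W ⊆ O := fun x hxW ↦ by_contra fun hxO ↦ hWO.subset ⟨hxW, hxO⟩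
    obtain ⟨V, hVf, hVo, hRV, hVC, hVd⟩ := ih hCo' (hR.sdiff hWo)
      fun x ⟨hxR, hxW⟩ ↦ by_contra fun hxC ↦ hxW (hRW ⟨hxR, hxC⟩)
    refine ⟨insert W ((· \ W) '' V), (hVf.image _).insert W, ?_, ?_, ?_, ?_⟩
    · rintro _ (rfl | ⟨v, hv, rfl⟩)
      exacts [hWo, (hVo v hv).sdiff hWc]
    · intro x hxR
      by_cases hxW : x ∈ W
      · exact ⟨W, mem_insert _ _, hxW⟩
      · obtain ⟨v, hv, hxv⟩ := hRV ⟨hxR, hxW⟩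
        exact ⟨v \ W, mem_insert_of_mem _ ⟨v, hv, rfl⟩, hxv, hxW⟩
    · rintro _ (rfl | ⟨v, hv, rfl⟩)
      · exact ⟨_, mem_insert _ _, hWO⟩
      · obtain ⟨U, hU, hvU⟩ := hVC v hv
        exact ⟨U, mem_insert_of_mem _ hU, sdiff_subset.trans hvU⟩
    · refine (hVd.image_of_le fun v ↦ sdiff_subset).insert fun _ ⟨v, _, hv⟩ _ ↦ ?_
      exact hv ▸ disjoint_sdiff_right

theorem covDimLE_zero_of_indLE0 {Y : Type*} [TopologicalSpace Y]
    (h : IndLE0 (inferInstance : TopologicalSpace Y)) :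
    covDimLE (inferInstance : TopologicalSpace Y) 0 := by
  intro C hCf hCo hCu
  obtain ⟨V, hVf, hVo, hV, hVC, hVd⟩ :=
    exists_disjoint_open_refinement_of_indLE0 h hCf hCo isClosed_univ hCu.ge
  refine ⟨V, hVf, hVo, univ_subset_iff.1 hV, hVC, fun F hF hcard ↦ ?_⟩
  obtain ⟨a, ha, b, hb, hab⟩ := Finset.one_lt_card.1 (by omega : 1 < F.card)
  exact sInter_eq_empty_of_pairwiseDisjoint hVd (hF ha) (hF hb) hab ha hb

theorem covDimLE_zero_of_countable {Y : Type*} [TopologicalSpace Y] [NormalSpace Y]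
    [Countable Y] : covDimLE (inferInstance : TopologicalSpace Y) 0 :=
  covDimLE_zero_of_indLE0 indLE0_of_countable

section InfEDist

variable {X : Type*} [PseudoEMetricSpace X]

theorem disjoint_setOf_infEDist_lt {s t s' t' : Set X} (hs' : s' ⊆ t) (hs : s ⊆ t') :
    Disjoint {x | infEDist x s < infEDist x t} {x | infEDist x s' < infEDist x t'} :=
  disjoint_left.2 fun _ h h' ↦ (h.trans_le (infEDist_anti hs')).trans
    (h'.trans_le (infEDist_anti hs)) |>.false

theorem subset_setOf_infEDist_lt {s t : Set X} (h : Disjoint s (closure t)) :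
    s ⊆ {x | infEDist x s < infEDist x t} := fun x hx ↦ by
  show infEDist x s < infEDist x t
  rw [infEDist_zero_of_mem hx, pos_iff_ne_zero]
  exact fun h0 ↦ disjoint_left.1 h hx (mem_closure_iff_infEDist_zero.2 h0)

/-- The traces of `C` on a zero-dimensional `S` have a disjoint open refinement `W` in `S`;
each `w ∈ W` is enlarged to the points closer to `w` than to `S \ w`. -/
theorem exists_disjoint_open_refinement_of_covDimLE_zero {S : Set X}
    (hS : covDimLE (inferInstance : TopologicalSpace S) 0) {C : Set (Set X)} (hCf : C.Finite)
    (hCo : ∀ U ∈ C, IsOpen U) (hSC : S ⊆ ⋃₀ C) :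
    ∃ V : Set (Set X), V.Finite ∧ (∀ v ∈ V, IsOpen v) ∧ S ⊆ ⋃₀ V ∧
      (∀ v ∈ V, ∃ U ∈ C, v ⊆ U) ∧ V.PairwiseDisjoint id := by
  obtain ⟨W, hWf, hWo, hWu, hWC, hWd⟩ := hS ((Subtype.val ⁻¹' ·) '' C) (hCf.image _)
    (by rintro _ ⟨U, hU, rfl⟩; exact (hCo U hU).preimage continuous_subtype_val)
    (eq_univ_of_forall fun x ↦ by simpa using hSC x.2)
  have hWdisj : W.PairwiseDisjoint id := fun a ha b hb hab ↦ by
    have := hWd {a, b} (by simp [insert_subset_iff, ha, hb]) (Finset.card_pair hab)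
    simpa [disjoint_iff_inter_eq_empty] using this
  choose! U hUC hWU using fun w hw ↦ (show ∃ U ∈ C, w ⊆ Subtype.val ⁻¹' U by
    simpa using hWC w hw)
  let G : Set S → Set X := fun w ↦
    {x | infEDist x (Subtype.val '' w) < infEDist x (Subtype.val '' wᶜ)} ∩ U w
  refine ⟨G '' W, hWf.image G, ?_, ?_, ?_, ?_⟩
  · rintro _ ⟨w, hw, rfl⟩
    exact (isOpen_lt continuous_infEDist continuous_infEDist).inter (hCo _ (hUC w hw))
  · intro x hx
    obtain ⟨w, hw, hxw⟩ : (⟨x, hx⟩ : S) ∈ ⋃₀ W := hWu ▸ mem_univ _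
    obtain ⟨O, hO, hwO⟩ := isOpen_induced_iff.1 (hWo w hw)
    refine ⟨G w, mem_image_of_mem G hw, subset_setOf_infEDist_lt ?_ ⟨⟨x, hx⟩, hxw, rfl⟩,
      hWU w hw hxw⟩
    refine (disjoint_compl_right.mono_right (closure_minimal ?_ hO.isClosed_compl)).mono_left
      (image_subset_iff.2 hwO.ge)
    rintro _ ⟨y, hy, rfl⟩ hyO
    exact hy (hwO ▸ hyO)
  · rintro _ ⟨w, hw, rfl⟩
    exact ⟨U w, hUC w hw, inter_subset_right⟩
  · rintro _ ⟨w, hw, rfl⟩ _ ⟨w', hw', rfl⟩ hne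
    have hww' : w ≠ w' := fun h ↦ hne (h ▸ rfl)
    refine (disjoint_setOf_infEDist_lt ?_ ?_).mono inter_subset_left inter_subset_left
    · exact image_mono ((hWdisj hw' hw hww'.symm).subset_compl_right)
    · exact image_mono ((hWdisj hw hw' hww').subset_compl_right)

end InfEDist

theorem covDimLE_one_of_covDimLE_zero_of_compl {X : Type*} [PseudoEMetricSpace X] {S : Set X}
    (hS : covDimLE (inferInstance : TopologicalSpace S) 0)
    (hSc : covDimLE (inferInstance : TopologicalSpace ↥Sᶜ) 0) :
    covDimLE (inferInstance : TopologicalSpace X) 1 := by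
  intro C hCf hCo hCu
  obtain ⟨V₁, hV₁f, hV₁o, hSV₁, hV₁C, hV₁d⟩ :=
    exists_disjoint_open_refinement_of_covDimLE_zero hS hCf hCo (hCu ▸ subset_univ S)
  obtain ⟨V₂, hV₂f, hV₂o, hSV₂, hV₂C, hV₂d⟩ :=
    exists_disjoint_open_refinement_of_covDimLE_zero hSc hCf hCo (hCu ▸ subset_univ Sᶜ)
  refine ⟨V₁ ∪ V₂, hV₁f.union hV₂f, fun v hv ↦ hv.elim (hV₁o v) (hV₂o v), ?_,
    fun v hv ↦ hv.elim (hV₁C v) (hV₂C v),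
    fun F hF hcard ↦ sInter_eq_empty_of_card_eq_three hV₁d hV₂d hF hcard⟩
  rw [sUnion_union, ← univ_subset_iff, ← union_compl_self S]
  exact union_subset_union hSV₁ hSV₂

theorem isOpen_singleton_bingHanner {X : Type*} (τ : TopologicalSpace X) {M : Set X} {x : X}
    (hx : x ∉ M) : (bingHanner τ M).IsOpen {x} :=
  ⟨∅, {x}, @isOpen_empty X τ, singleton_subset_iff.2 hx, (empty_union _).symm⟩

theorem countable_compl_of_separableSpace_bingHanner {X : Type*} {τ : TopologicalSpace X}
    {M : Set X} (h : @TopologicalSpace.SeparableSpace X (bingHanner τ M)) : Mᶜ.Countable :=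
  letI := bingHanner τ M
  (pairwiseDisjoint_singleton' Mᶜ).countable_of_isOpen
    (fun _ hx ↦ isOpen_singleton_bingHanner τ hx) fun x _ ↦ singleton_nonempty x

theorem bingHanner_not_separable_of_dim_ge_two_general {X : Type*} (τ : TopologicalSpace X)
    (hmet : @TopologicalSpace.MetrizableSpace X τ) (hdim : ¬ covDimLE τ 1)
    (M : Set X)
    (hM : covDimLE (TopologicalSpace.induced (Subtype.val : M → X) τ) 0) :
    ¬ @TopologicalSpace.SeparableSpace X (bingHanner τ M) ∧ ¬ (Mᶜ).Countable := by
  let _ : TopologicalSpace X := τ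
  let _ : MetricSpace X := TopologicalSpace.metrizableSpaceMetric X
  have hMc : ¬ Mᶜ.Countable := fun hc ↦
    haveI := hc.to_subtype
    hdim (covDimLE_one_of_covDimLE_zero_of_compl hM covDimLE_zero_of_countable)
  exact ⟨fun h ↦ hMc (countable_compl_of_separableSpace_bingHanner h), hMc⟩

/-- If `(X, τ)` is separable metrizable and `dim (X, τ) ≤ 1` fails,
then for every `Gδ`-set `M` with `dim M ≤ 0` the metrizable space `(X, τ(M))` is not
separable; in particular `X \ M` is uncountable. -/
theorem bingHanner_not_separable_of_dim_ge_two {X : Type*} (τ : TopologicalSpace X)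
    (hsep : @TopologicalSpace.SeparableSpace X τ)
    (hmet : @TopologicalSpace.MetrizableSpace X τ) (hdim : ¬ covDimLE τ 1)
    (M : Set X) (hGdelta : @IsGδ X τ M)
    (hM : covDimLE (TopologicalSpace.induced (Subtype.val : M → X) τ) 0) :
    ¬ @TopologicalSpace.SeparableSpace X (bingHanner τ M) ∧ ¬ (Mᶜ).Countable :=
  bingHanner_not_separable_of_dim_ge_two_general τ hmet hdim M hM
end
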